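/- Every permutation achievable by two stacks in series is produced by some operation sequence containing none of the forbidden factors ρμ, ρλμλ, or uv where u is a ρ,λ-Catalan word and v is a λ,μ-Catalan word. -/

import Mathlib

namespace TwoStacks

/-- A state of the two-stacks-in-series machine: remaining input,
stack 1, stack 2 (tops at the head), and the output so far. -/
structure St where
  inp : List ℕ
  s1 : List ℕ
  s2 : List ℕ
  out : List ℕ
deriving DecidableEq

/-- The three moves. -/
inductive Mv
  | rho  -- input → stack 1
  | lam  -- stack 1 → stack 2
  | mu   -- stack 2 → output
deriving DecidableEq

/-- One move of the machine (`none` if the move is not applicable). -/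
def step : Mv → St → Option St
  | .rho, ⟨x :: xs, s1, s2, o⟩ => some ⟨xs, x :: s1, s2, o⟩
  | .lam, ⟨i, x :: xs, s2, o⟩ => some ⟨i, xs, x :: s2, o⟩
  | .mu,  ⟨i, s1, x :: xs, o⟩ => some ⟨i, s1, xs, o ++ [x]⟩
  | _, _ => none

/-- Run a word of moves on a state. -/
def run (w : List Mv) (s : St) : Option St :=
  w.foldlM (fun s m => step m s) s

/-- The list 1,2,…,n. -/
def idSeq (n : ℕ) : List ℕ := (List.range n).map (· + 1)

/-- The one-line notation p(1),…,p(n) (values in {1,…,n}) of a permutation. -/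
def permList {n : ℕ} (p : Equiv.Perm (Fin n)) : List ℕ :=
  List.ofFn fun i => (p i : ℕ) + 1

/-- p is achievable: from input 1,…,n some word of moves outputs p(1),…,p(n). -/
def Achievable {n : ℕ} (p : Equiv.Perm (Fin n)) : Prop :=
  ∃ w, run w ⟨idSeq n, [], [], []⟩ = some ⟨[], [], [], permList p⟩

/-- p is sortable: from input p(1),…,p(n) some word of moves outputs 1,…,n. -/
def Sortable {n : ℕ} (p : Equiv.Perm (Fin n)) : Prop :=
  ∃ w, run w ⟨permList p, [], [], []⟩ = some ⟨[], [], [], idSeq n⟩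

/-- A list of (distinct) naturals is achievable as an output. -/
def AchList (l : List ℕ) : Prop :=
  ∃ w, run w ⟨idSeq l.length, [], [], []⟩ = some ⟨[], [], [], l⟩

/-- Standardization (pattern) of a list with distinct entries:
each entry is replaced by its rank (1-based). -/
def std (l : List ℕ) : List ℕ :=
  l.map fun x => (l.filter (· ≤ x)).length

/-- An operation sequence of length 3n: n of each letter, and every
prefix has #ρ ≥ #λ ≥ #μ. -/
def OpSeq (n : ℕ) (w : List Mv) : Prop :=
  w.length = 3 * n ∧ w.count .rho = n ∧ w.count .lam = n ∧ w.count .mu = n ∧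
  ∀ u, u <+: w → u.count .mu ≤ u.count .lam ∧ u.count .lam ≤ u.count .rho

/-- An x,y-Catalan word: word over {x,y} with equally many x's and y's
in which every prefix has at least as many x's as y's. -/
def CatWord (x y : Mv) (w : List Mv) : Prop :=
  (∀ m ∈ w, m = x ∨ m = y) ∧ w.count x = w.count y ∧
  ∀ u, u <+: w → u.count y ≤ u.count x

/-- Two words have the same effect: applied to any state on which both
are applicable, they give the same resulting state. -/
def SameEffect (v v' : List Mv) : Prop :=
  ∀ s t t', run v s = some t → run v' s = some t' → t = t'

/-- Rank of a letter for the order ρ < λ < μ. -/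
def rk : Mv → ℕ
  | .rho => 0
  | .lam => 1
  | .mu => 2

/-- The order ρ < λ < μ on letters. -/
def mlt (a b : Mv) : Prop := rk a < rk b

/-- Lexicographic order on words induced by ρ < λ < μ. -/
def wordLt (v v' : List Mv) : Prop := List.Lex mlt v v'

/-- No entry is immediately followed by its successor. -/
def IncAvoid (l : List ℕ) : Prop :=
  ∀ j (h : j + 1 < l.length), l.get ⟨j + 1, h⟩ ≠ l.get ⟨j, by omega⟩ + 1


def key : List Mv → ℕ
  | [] => 0
  | c :: t => rk c * 3 ^ t.length + key t

lemma key_lt (w : List Mv) : key w < 3 ^ w.length := by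
  induction w with
  | nil => simp [key]
  | cons c t ih =>
    have h2 : rk c ≤ 2 := by cases c <;> simp [rk]
    simp only [key, List.length_cons, pow_succ]
    nlinarith

lemma key_append (u v : List Mv) :
    key (u ++ v) = key u * 3 ^ v.length + key v := by
  induction u with
  | nil => simp [key]
  | cons c t ih =>
    simp [key, List.length_append, ih, pow_add]
    ring

lemma key_mono_mid (a b f f' : List Mv) (hl : f.length = f'.length)
    (hk : key f < key f') : key (a ++ f ++ b) < key (a ++ f' ++ b) := by
  have : (0:ℕ) < 3 ^ b.length := by positivity
  simp only [List.append_assoc, key_append, List.length_append, hl, pow_add]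
  nlinarith

lemma key_uv (u' v' u v : List Mv) (hu : u = .rho :: u') (hv : v = .lam :: v') :
    key (u ++ v) < key (v ++ u) := by
  subst hu hv
  rw [key_append, key_append]
  have h1 : key (Mv.rho :: u') = key u' := by simp [key, rk]
  have h2 : key (Mv.lam :: v') = 3 ^ v'.length + key v' := by simp [key, rk]
  have h3 := key_lt u'
  have h4 := key_lt v'
  have h5 : (0:ℕ) < 3 ^ u'.length := by positivity
  have h6 : (0:ℕ) < 3 ^ v'.length := by positivity
  rw [h1, h2]
  simp only [List.length_cons, pow_succ]
  nlinarith

lemma run_nil (s : St) : run [] s = some s := rfl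

lemma run_cons (m : Mv) (w : List Mv) (s : St) :
    run (m :: w) s = (step m s).bind (run w) := by
  simp [run, List.foldlM_cons]; rfl

lemma run_append (u v : List Mv) (s : St) :
    run (u ++ v) s = (run u s).bind (run v) := by
  simp [run, List.foldlM_append]; rfl

lemma count_sum (w : List Mv) :
    w.count .rho + w.count .lam + w.count .mu = w.length := by
  induction w with
  | nil => simp
  | cons m t ih => cases m <;> simp [List.count_cons] <;> omega

lemma run_counts : ∀ (w : List Mv) (s t : St), run w s = some t →
    s.inp.length = t.inp.length + w.count .rho ∧
    t.s1.length + w.count .lam = s.s1.length + w.count .rho ∧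
    t.s2.length + w.count .mu = s.s2.length + w.count .lam ∧
    t.out.length = s.out.length + w.count .mu := by
  intro w
  induction w with
  | nil => intro s t h; rw [run_nil] at h; cases h; simp
  | cons m w ih =>
    intro s t h
    rw [run_cons] at h
    rcases hs : step m s with _ | s'
    · rw [hs] at h; simp at h
    rw [hs] at h; simp at h
    have := ih s' t h
    rcases s with ⟨i, s1, s2, o⟩
    cases m
    · cases i with
      | nil => simp [step] at hs
      | cons x xs => simp [step] at hs; subst hs; simp_all [List.count_cons]; omega
    · cases s1 with
      | nil => simp [step] at hs
      | cons x xs => simp [step] at hs; subst hs; simp_all [List.count_cons]; omega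
    · cases s2 with
      | nil => simp [step] at hs
      | cons x xs => simp [step] at hs; subst hs; simp_all [List.count_cons]; omega


def simU : List Mv → List ℕ × List ℕ × List ℕ → Option (List ℕ × List ℕ × List ℕ)
  | [], st => some st
  | .rho :: w, (x :: I, N, A) => simU w (I, x :: N, A)
  | .lam :: w, (I, x :: N, A) => simU w (I, N, x :: A)
  | _, _ => none

lemma simU_acc : ∀ (u : List Mv) (I N A : List ℕ),
    simU u (I, N, A) = (simU u (I, N, [])).map fun r => (r.1, r.2.1, r.2.2 ++ A) := by
  intro u
  induction u with
  | nil => intro I N A; simp [simU]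
  | cons m w ih =>
    intro I N A
    cases m
    · cases I with
      | nil => simp [simU]
      | cons x I => simp only [simU]; rw [ih, ih]
    · cases N with
      | nil => simp [simU]
      | cons x N =>
        simp only [simU]
        rw [ih I N (x :: A), ih I N [x]]
        cases simU w (I, N, []) <;> simp
    · simp [simU]

lemma simU_lens : ∀ (u : List Mv) (I N A I' N' A' : List ℕ),
    simU u (I, N, A) = some (I', N', A') →
    I.length = I'.length + u.count .rho ∧
    N'.length + u.count .lam = N.length + u.count .rho := by
  intro u
  induction u with
  | nil => intro I N A I' N' A' h; simp [simU] at h; rcases h with ⟨rfl, rfl, rfl⟩; simp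
  | cons m w ih =>
    intro I N A I' N' A' h
    cases m
    · cases I with
      | nil => simp [simU] at h
      | cons x I =>
        simp only [simU] at h
        have := ih _ _ _ _ _ _ h
        simp only [List.length_cons] at this
        simp [List.count_cons]; omega
    · cases N with
      | nil => simp [simU] at h
      | cons x N =>
        simp only [simU] at h
        have := ih _ _ _ _ _ _ h
        simp [List.count_cons]; omega
    · simp [simU] at h

lemma simU_run : ∀ (u : List Mv) (I N A I' N' A' S1 S2 O : List ℕ),
    simU u (I, N, []) = some (I', N', A') →
    run u ⟨I, N ++ S1, S2, O⟩ = some ⟨I', N' ++ S1, A' ++ S2, O⟩ := by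
  intro u
  induction u with
  | nil =>
    intro I N A I' N' A' S1 S2 O h
    simp [simU] at h; rcases h with ⟨rfl, rfl, rfl⟩; simp [run_nil]
  | cons m w ih =>
    intro I N A I' N' A' S1 S2 O h
    cases m
    · cases I with
      | nil => simp [simU] at h
      | cons x I =>
        simp only [simU] at h
        rw [run_cons]
        have : step .rho ⟨x :: I, N ++ S1, S2, O⟩ = some ⟨I, (x :: N) ++ S1, S2, O⟩ := by
          simp [step]
        rw [this, Option.bind_some]
        exact ih _ _ A _ _ _ _ _ _ h
    · cases N with
      | nil => simp [simU] at h
      | cons x N =>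
        simp only [simU] at h
        rw [simU_acc] at h
        rcases h0 : simU w (I, N, []) with _ | r
        · rw [h0] at h; simp at h
        rw [h0] at h; simp at h
        obtain ⟨h1, h2, h3⟩ := h
        rw [run_cons]
        have : step .lam ⟨I, (x :: N) ++ S1, S2, O⟩ = some ⟨I, N ++ S1, x :: S2, O⟩ := by
          simp [step]
        rw [this, Option.bind_some]
        obtain ⟨r1, r2, r3⟩ := r
        have := ih _ _ ([]:List ℕ) _ _ _ S1 (x :: S2) O (by rw [h0])
        simp only at h1 h2 h3
        subst h1 h2
        rw [this]
        congr 1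
        · simp [← h3]
    · simp [simU] at h

lemma run_simU : ∀ (u : List Mv) (I N S1 S2 O : List ℕ) (t : St),
    (∀ m ∈ u, m = Mv.rho ∨ m = Mv.lam) →
    (∀ p, p <+: u → p.count Mv.lam ≤ p.count Mv.rho + N.length) →
    run u ⟨I, N ++ S1, S2, O⟩ = some t →
    ∃ r, simU u (I, N, []) = some r := by
  intro u
  induction u with
  | nil => intro I N S1 S2 O t _ _ _; exact ⟨_, rfl⟩
  | cons m w ih =>
    intro I N S1 S2 O t hmem hpre hrun
    rcases hmem m (List.mem_cons_self) with rfl | rfl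
    · cases I with
      | nil => rw [run_cons] at hrun; simp [step] at hrun
      | cons x I =>
        rw [run_cons] at hrun
        have hstep : step .rho ⟨x :: I, N ++ S1, S2, O⟩ = some ⟨I, (x :: N) ++ S1, S2, O⟩ := by
          simp [step]
        rw [hstep, Option.bind_some] at hrun
        have hpre' : ∀ p, p <+: w → p.count Mv.lam ≤ p.count Mv.rho + (x :: N).length := by
          intro p hp
          have := hpre (.rho :: p) (List.cons_prefix_cons.mpr ⟨rfl, hp⟩)
          simp [List.count_cons] at this ⊢; omega
        obtain ⟨r, hr⟩ := ih I (x :: N) S1 S2 O t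
          (fun m hm => hmem m (List.mem_cons_of_mem _ hm)) hpre' hrun
        exact ⟨r, by simpa [simU] using hr⟩
    · cases N with
      | nil =>
        have := hpre [.lam] ⟨w, rfl⟩
        simp at this
      | cons x N =>
        rw [run_cons] at hrun
        have hstep : step .lam ⟨I, (x :: N) ++ S1, S2, O⟩ = some ⟨I, N ++ S1, x :: S2, O⟩ := by
          simp [step]
        rw [hstep, Option.bind_some] at hrun
        have hpre' : ∀ p, p <+: w → p.count Mv.lam ≤ p.count Mv.rho + N.length := by
          intro p hp
          have := hpre (.lam :: p) (List.cons_prefix_cons.mpr ⟨rfl, hp⟩)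
          simp [List.count_cons] at this ⊢; omega
        obtain ⟨r, hr⟩ := ih I N S1 (x :: S2) O t
          (fun m hm => hmem m (List.mem_cons_of_mem _ hm)) hpre' hrun
        refine ⟨(r.1, r.2.1, r.2.2 ++ [x]), ?_⟩
        show simU w (I, N, [x]) = _
        rw [simU_acc, hr]
        simp

def simV : List Mv → List ℕ × List ℕ × List ℕ → Option (List ℕ × List ℕ × List ℕ)
  | [], st => some st
  | .lam :: w, (x :: S, N, O) => simV w (S, x :: N, O)
  | .mu :: w, (S, x :: N, O) => simV w (S, N, O ++ [x])
  | _, _ => none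

lemma simV_acc : ∀ (u : List Mv) (S N O : List ℕ),
    simV u (S, N, O) = (simV u (S, N, [])).map fun r => (r.1, r.2.1, O ++ r.2.2) := by
  intro u
  induction u with
  | nil => intro S N O; simp [simV]
  | cons m w ih =>
    intro S N O
    cases m
    · simp [simV]
    · cases S with
      | nil => simp [simV]
      | cons x S => simp only [simV]; rw [ih, ih]
    · cases N with
      | nil => simp [simV]
      | cons x N =>
        simp only [simV]
        rw [ih S N (O ++ [x]), ih S N ([] ++ [x])]
        cases simV w (S, N, []) <;> simp

lemma simV_lens : ∀ (u : List Mv) (S N O S' N' O' : List ℕ),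
    simV u (S, N, O) = some (S', N', O') →
    S.length = S'.length + u.count .lam ∧
    N'.length + u.count .mu = N.length + u.count .lam := by
  intro u
  induction u with
  | nil => intro S N O S' N' O' h; simp [simV] at h; rcases h with ⟨rfl, rfl, rfl⟩; simp
  | cons m w ih =>
    intro S N O S' N' O' h
    cases m
    · simp [simV] at h
    · cases S with
      | nil => simp [simV] at h
      | cons x S =>
        simp only [simV] at h
        have := ih _ _ _ _ _ _ h
        simp only [List.length_cons] at this
        simp [List.count_cons]; omega
    · cases N with
      | nil => simp [simV] at h
      | cons x N =>
        simp only [simV] at h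
        have := ih _ _ _ _ _ _ h
        simp [List.count_cons]; omega

lemma simV_run : ∀ (u : List Mv) (S N S' N' O' I B2 Ou : List ℕ),
    simV u (S, N, []) = some (S', N', O') →
    run u ⟨I, S, N ++ B2, Ou⟩ = some ⟨I, S', N' ++ B2, Ou ++ O'⟩ := by
  intro u
  induction u with
  | nil =>
    intro S N S' N' O' I B2 Ou h
    simp [simV] at h; rcases h with ⟨rfl, rfl, rfl⟩; simp [run_nil]
  | cons m w ih =>
    intro S N S' N' O' I B2 Ou h
    cases m
    · simp [simV] at h
    · cases S with
      | nil => simp [simV] at h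
      | cons x S =>
        simp only [simV] at h
        rw [run_cons]
        have : step .lam ⟨I, x :: S, N ++ B2, Ou⟩ = some ⟨I, S, (x :: N) ++ B2, Ou⟩ := by
          simp [step]
        rw [this, Option.bind_some]
        exact ih _ _ _ _ _ _ _ _ h
    · cases N with
      | nil => simp [simV] at h
      | cons x N =>
        simp only [simV] at h
        rw [simV_acc] at h
        rcases h0 : simV w (S, N, []) with _ | r
        · rw [h0] at h; simp at h
        rw [h0] at h; simp at h
        obtain ⟨h1, h2, h3⟩ := h
        rw [run_cons]
        have : step .mu ⟨I, S, (x :: N) ++ B2, Ou⟩ = some ⟨I, S, N ++ B2, Ou ++ [x]⟩ := by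
          simp [step]
        rw [this, Option.bind_some]
        obtain ⟨r1, r2, r3⟩ := r
        have := ih _ _ _ _ _ I B2 (Ou ++ [x]) (by rw [h0])
        simp only at h1 h2 h3
        subst h1 h2
        rw [this]
        congr 1
        simp [← h3]

lemma run_simV : ∀ (u : List Mv) (S N B2 I O : List ℕ) (t : St),
    (∀ m ∈ u, m = Mv.lam ∨ m = Mv.mu) →
    (∀ p, p <+: u → p.count Mv.mu ≤ p.count Mv.lam + N.length) →
    run u ⟨I, S, N ++ B2, O⟩ = some t →
    ∃ r, simV u (S, N, []) = some r := by
  intro u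
  induction u with
  | nil => intro S N B2 I O t _ _ _; exact ⟨_, rfl⟩
  | cons m w ih =>
    intro S N B2 I O t hmem hpre hrun
    rcases hmem m (List.mem_cons_self) with rfl | rfl
    · cases S with
      | nil => rw [run_cons] at hrun; simp [step] at hrun
      | cons x S =>
        rw [run_cons] at hrun
        have hstep : step .lam ⟨I, x :: S, N ++ B2, O⟩ = some ⟨I, S, (x :: N) ++ B2, O⟩ := by
          simp [step]
        rw [hstep, Option.bind_some] at hrun
        have hpre' : ∀ p, p <+: w → p.count Mv.mu ≤ p.count Mv.lam + (x :: N).length := by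
          intro p hp
          have := hpre (.lam :: p) (List.cons_prefix_cons.mpr ⟨rfl, hp⟩)
          simp [List.count_cons] at this ⊢; omega
        obtain ⟨r, hr⟩ := ih S (x :: N) B2 I O t
          (fun m hm => hmem m (List.mem_cons_of_mem _ hm)) hpre' hrun
        exact ⟨r, by simpa [simV] using hr⟩
    · cases N with
      | nil =>
        have := hpre [.mu] ⟨w, rfl⟩
        simp at this
      | cons x N =>
        rw [run_cons] at hrun
        have hstep : step .mu ⟨I, S, (x :: N) ++ B2, O⟩ = some ⟨I, S, N ++ B2, O ++ [x]⟩ := by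
          simp [step]
        rw [hstep, Option.bind_some] at hrun
        have hpre' : ∀ p, p <+: w → p.count Mv.mu ≤ p.count Mv.lam + N.length := by
          intro p hp
          have := hpre (.mu :: p) (List.cons_prefix_cons.mpr ⟨rfl, hp⟩)
          simp [List.count_cons] at this ⊢; omega
        obtain ⟨r, hr⟩ := ih S N B2 I (O ++ [x]) t
          (fun m hm => hmem m (List.mem_cons_of_mem _ hm)) hpre' hrun
        refine ⟨(r.1, r.2.1, [x] ++ r.2.2), ?_⟩
        show simV w (S, N, [x]) = _
        rw [simV_acc, hr]
        simp


lemma swap_rm (s t : St) (h : run [.rho, .mu] s = some t) :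
    run [.mu, .rho] s = some t := by
  rcases s with ⟨i, s1, s2, o⟩
  cases i with
  | nil => simp [run_cons, run_nil, step] at h
  | cons x i =>
    cases s2 with
    | nil => simp [run_cons, run_nil, step] at h
    | cons y s2 =>
      simp [run_cons, run_nil, step] at h ⊢
      exact h

lemma swap_rlml (s t : St) (h : run [.rho, .lam, .mu, .lam] s = some t) :
    run [.lam, .rho, .lam, .mu] s = some t := by
  rcases s with ⟨i, s1, s2, o⟩
  cases i with
  | nil => simp [run_cons, run_nil, step] at h
  | cons x i =>
    cases s1 with
    | nil => simp [run_cons, run_nil, step] at h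
    | cons y s1 =>
      simp [run_cons, run_nil, step] at h ⊢
      exact h

lemma cat_head {x y : Mv} (hxy : x ≠ y) {w : List Mv} (hw : CatWord x y w)
    (hne : w ≠ []) : ∃ t, w = x :: t := by
  cases w with
  | nil => simp at hne
  | cons m t =>
    rcases hw.1 m (List.mem_cons_self) with rfl | rfl
    · exact ⟨t, rfl⟩
    · exfalso
      have h1 := hw.2.2 [m] ⟨t, rfl⟩
      rw [List.count_singleton] at h1
      have h2 : List.count x [m] = 0 := by
        rw [List.count_eq_zero]
        simp only [List.mem_singleton]
        exact fun hh => hxy hh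
      rw [h2] at h1
      simp at h1

lemma comm_uv (u v : List Mv) (hu : CatWord .rho .lam u) (hv : CatWord .lam .mu v)
    (s t : St) (h : run (u ++ v) s = some t) : run (v ++ u) s = some t := by
  rw [run_append, Option.bind_eq_some_iff] at h
  obtain ⟨m, hm, h⟩ := h
  rcases s with ⟨I, S1, S2, O⟩
  obtain ⟨humem, hucnt, hupre⟩ := hu
  obtain ⟨hvmem, hvcnt, hvpre⟩ := hv
  have hm' : run u ⟨I, [] ++ S1, S2, O⟩ = some m := hm
  obtain ⟨⟨I', N', A⟩, hsim⟩ := run_simU u I [] S1 S2 O m humem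
    (fun p hp => by simpa using hupre p hp) hm'
  have hlen := simU_lens u I [] [] I' N' A hsim
  simp only [List.length_nil] at hlen
  have hN : N' = [] := by
    apply List.eq_nil_of_length_eq_zero
    omega
  subst hN
  have hrunu := simU_run u I [] [] I' [] A S1 S2 O hsim
  have hmeq : m = ⟨I', S1, A ++ S2, O⟩ := by
    rw [hm'] at hrunu
    simpa using hrunu
  subst hmeq
  have h' : run v ⟨I', S1, [] ++ (A ++ S2), O⟩ = some t := by simpa using h
  obtain ⟨⟨S1', N2, Oo⟩, hsimv⟩ := run_simV v S1 [] (A ++ S2) I' O t hvmem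
    (fun p hp => by simpa using hvpre p hp) h'
  have hlen2 := simV_lens v S1 [] [] S1' N2 Oo hsimv
  simp only [List.length_nil] at hlen2
  have hN2 : N2 = [] := by
    apply List.eq_nil_of_length_eq_zero
    omega
  subst hN2
  have hrunv := simV_run v S1 [] S1' [] Oo I' (A ++ S2) O hsimv
  have hteq : t = ⟨I', S1', A ++ S2, O ++ Oo⟩ := by
    rw [h'] at hrunv
    simpa using hrunv
  subst hteq
  rw [run_append]
  have r1 : run v ⟨I, S1, S2, O⟩ = some ⟨I, S1', S2, O ++ Oo⟩ := by
    have := simV_run v S1 [] S1' [] Oo I S2 O hsimv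
    simpa using this
  rw [r1, Option.bind_some]
  have := simU_run u I [] [] I' [] A S1' S2 (O ++ Oo) hsim
  simpa using this

theorem achievable_has_nonforbidden_opseq (n : ℕ) (p : Equiv.Perm (Fin n))
    (h : Achievable p) :
    ∃ w : List Mv, OpSeq n w ∧
      run w ⟨idSeq n, [], [], []⟩ = some ⟨[], [], [], permList p⟩ ∧
      ¬ [Mv.rho, Mv.mu] <:+: w ∧
      ¬ [Mv.rho, Mv.lam, Mv.mu, Mv.lam] <:+: w ∧
      ∀ u v : List Mv, CatWord Mv.rho Mv.lam u → CatWord Mv.lam Mv.mu v →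
        u ≠ [] → v ≠ [] → ¬ (u ++ v) <:+: w := by
  classical
  obtain ⟨w₀, hw₀⟩ := h
  have hop : ∀ w, run w ⟨idSeq n, [], [], []⟩ = some ⟨[], [], [], permList p⟩ →
      OpSeq n w := by
    intro w hw
    have hc := run_counts w ⟨idSeq n, [], [], []⟩ ⟨[], [], [], permList p⟩ hw
    simp only [List.length_nil] at hc
    have hIlen : (idSeq n).length = n := by simp [idSeq]
    have hrho : w.count .rho = n := by omega
    have hlam : w.count .lam = n := by omega
    have hmu : w.count .mu = n := by omega
    have hsum := count_sum w
    refine ⟨by omega, hrho, hlam, hmu, ?_⟩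
    intro u hu
    obtain ⟨rest, rfl⟩ := hu
    rw [run_append, Option.bind_eq_some_iff] at hw
    obtain ⟨su, hu', -⟩ := hw
    have hc2 := run_counts u ⟨idSeq n, [], [], []⟩ su hu'
    simp only [List.length_nil] at hc2
    omega
  set K : Set ℕ := {k | ∃ w, run w ⟨idSeq n, [], [], []⟩ = some ⟨[], [], [], permList p⟩
    ∧ key w = k} with hK
  have hKne : K.Nonempty := ⟨key w₀, w₀, hw₀, rfl⟩
  have hKbdd : BddAbove K := by
    refine ⟨3 ^ (3 * n), ?_⟩
    rintro k ⟨w, hw, rfl⟩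
    have hlt := key_lt w
    rw [(hop w hw).1] at hlt
    exact hlt.le
  obtain ⟨w, hwach, hwkey⟩ := Nat.sSup_mem hKne hKbdd
  have hmax : ∀ w', run w' ⟨idSeq n, [], [], []⟩ = some ⟨[], [], [], permList p⟩ →
      key w' ≤ key w := by
    intro w' hw'
    rw [hwkey]
    exact le_csSup hKbdd ⟨w', hw', rfl⟩
  have repl : ∀ (a f f' b : List Mv), w = a ++ f ++ b →
      (∀ s t, run f s = some t → run f' s = some t) →
      f.length = f'.length → key f < key f' → False := by
    intro a f f' b hdecomp heff hlen hkey
    have hach : run (a ++ f' ++ b) ⟨idSeq n, [], [], []⟩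
        = some ⟨[], [], [], permList p⟩ := by
      rw [hdecomp, List.append_assoc, run_append, Option.bind_eq_some_iff] at hwach
      obtain ⟨sa, ha, hwach⟩ := hwach
      rw [run_append, Option.bind_eq_some_iff] at hwach
      obtain ⟨sf, hf, hwach⟩ := hwach
      rw [List.append_assoc, run_append, ha, Option.bind_some, run_append,
        heff sa sf hf, Option.bind_some]
      exact hwach
    have h1 := hmax _ hach
    have h2 := key_mono_mid a b f f' hlen hkey
    rw [← hdecomp] at h2
    omega
  refine ⟨w, hop w hwach, hwach, ?_, ?_, ?_⟩
  · rintro ⟨a, b, hab⟩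
    exact repl a [.rho, .mu] [.mu, .rho] b hab.symm swap_rm rfl (by decide)
  · rintro ⟨a, b, hab⟩
    exact repl a [.rho, .lam, .mu, .lam] [.lam, .rho, .lam, .mu] b hab.symm
      swap_rlml rfl (by decide)
  · intro u v hu hv hune hvne hinf
    obtain ⟨a, b, hab⟩ := hinf
    obtain ⟨u', hu'⟩ := cat_head (by decide) hu hune
    obtain ⟨v', hv'⟩ := cat_head (by decide) hv hvne
    exact repl a (u ++ v) (v ++ u) b hab.symm
      (comm_uv u v hu hv) (by simp [List.length_append, Nat.add_comm]) (key_uv u' v' u v hu' hv')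

end TwoStacks
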